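/- arXiv:2007.03959 — 2 statements merged into one kernel-verified Lean document; each statement's English description precedes it below -/
import Mathlib

section
/- Let G be a finite graph, τ a threshold function, and (X_t) the activation process starting from a non-monotone target set X₀. Let u and v be adjacent vertices with τ(u) = deg_G(u) and τ(v) = deg_G(v). Then u ∈ X_t for every t ≥ 0. (Indeed, if u ∉ X_t for some t, then v ∉ X_{t+1} and u ∉ X_{t+2}, so u ∉ X_{t+2k} for all k ≥ 0, contradicting that X₀ is a target set.) -/
open Finset

/-- The non-monotone activation process on `(G, τ)` starting with `X`:
`X_t = {u : |N_G(u) ∩ X_{t-1}| ≥ τ(u)}` for `t ≥ 1`. -/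
def activation {V : Type*} (G : SimpleGraph V) [Fintype V] [DecidableEq V]
    [DecidableRel G.Adj] (τ : V → ℤ) (X : Finset V) : ℕ → Finset V
  | 0 => X
  | t + 1 => Finset.univ.filter
      (fun u => τ u ≤ ((G.neighborFinset u ∩ activation G τ X t).card : ℤ))

/-- `X` is a non-monotone target set for `(G, τ)`. -/
def IsTargetSet {V : Type*} (G : SimpleGraph V) [Fintype V] [DecidableEq V]
    [DecidableRel G.Adj] (τ : V → ℤ) (X : Finset V) : Prop :=
  ∃ t₀ : ℕ, ∀ t ≥ t₀, activation G τ X t = Finset.univ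

/-- Open neighbourhood of a set of vertices: `N_G(S)`. -/
def openNbhd {V : Type*} (G : SimpleGraph V) (S : Set V) : Set V :=
  {v | v ∉ S ∧ ∃ u ∈ S, G.Adj u v}

/-- Closed neighbourhood of a set of vertices: `N_G[S]`. -/
def closedNbhd {V : Type*} (G : SimpleGraph V) (S : Set V) : Set V :=
  S ∪ openNbhd G S

/-- Closed neighbourhood, as a finset. -/
def closedNbhdFinset {V : Type*} (G : SimpleGraph V) [Fintype V] [DecidableEq V]
    [DecidableRel G.Adj] (U : Finset V) : Finset V :=
  U ∪ Finset.univ.filter (fun v => ∃ u ∈ U, G.Adj u v)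

/-- `U` is the vertex set of a connected component of the subgraph of `G` induced by `S`. -/
def IsComponentOf {V : Type*} (G : SimpleGraph V) (S U : Set V) : Prop :=
  U ⊆ S ∧ U.Nonempty ∧ (G.induce U).Connected ∧
    ∀ u ∈ U, ∀ v ∈ S, G.Adj u v → v ∈ U

/-- The subgraph of `G` induced by `S`, as a graph on the subtype `S`. -/
def restrict {V : Type*} (G : SimpleGraph V) (S : Set V) : SimpleGraph S where
  Adj a b := G.Adj a b
  symm := ⟨fun _ _ h => G.adj_symm h⟩
  loopless := ⟨fun _ h => G.irrefl h⟩

instance {V : Type*} (G : SimpleGraph V) (S : Set V) [h : DecidableRel G.Adj] :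
    DecidableRel (restrict G S).Adj := fun a b => h a b

/- With `τ = deg` on both ends of the edge `uv`, a missing `u` forces `v` out one round later,
and then `u` out again: the non-activation of `u` propagates with period two and never dies out,
which a target set does not allow. -/

section Activation

variable {V : Type*} [Fintype V] [DecidableEq V] (G : SimpleGraph V) [DecidableRel G.Adj]
  (τ : V → ℤ) (X : Finset V)

theorem not_mem_activation_succ_of_adj {w x : V} (hadj : G.Adj w x)
    (hx : (G.degree x : ℤ) ≤ τ x) {t : ℕ} (hw : w ∉ activation G τ X t) :
    x ∉ activation G τ X (t + 1) := by
  intro hmem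
  simp only [activation, mem_filter, mem_univ, true_and] at hmem
  have hssub : G.neighborFinset x ∩ activation G τ X t ⊂ G.neighborFinset x :=
    (ssubset_iff_of_subset inter_subset_left).mpr
      ⟨w, (G.mem_neighborFinset x w).mpr hadj.symm, fun h => hw (mem_inter.mp h).2⟩
  have hlt := card_lt_card hssub
  rw [G.card_neighborFinset_eq_degree] at hlt
  omega

theorem not_mem_activation_add_two_mul {u v : V} (hadj : G.Adj u v)
    (hu : (G.degree u : ℤ) ≤ τ u) (hv : (G.degree v : ℤ) ≤ τ v) {t : ℕ}
    (ht : u ∉ activation G τ X t) (k : ℕ) :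
    u ∉ activation G τ X (t + 2 * k) := by
  induction k with
  | zero => simpa using ht
  | succ k ih =>
    have hv' := not_mem_activation_succ_of_adj G τ X hadj hv ih
    exact not_mem_activation_succ_of_adj G τ X hadj.symm hu hv'

end Activation

theorem stmt_4 {V : Type*} [Fintype V] [DecidableEq V] (G : SimpleGraph V)
    [DecidableRel G.Adj] (τ : V → ℤ) (X₀ : Finset V)
    (hX : IsTargetSet G τ X₀) (u v : V) (hadj : G.Adj u v)
    (hu : τ u = (G.degree u : ℤ)) (hv : τ v = (G.degree v : ℤ)) :
    ∀ t : ℕ, u ∈ activation G τ X₀ t := by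
  intro t
  by_contra ht
  obtain ⟨t₀, ht₀⟩ := hX
  have hout := not_mem_activation_add_two_mul G τ X₀ hadj hu.ge hv.ge ht t₀
  rw [ht₀ (t + 2 * t₀) (by omega)] at hout
  exact hout (mem_univ u)
end

section
/- Let G be a finite graph, τ a threshold function with τ(u) ∈ {0,1,deg_G(u)} for all u, and U the vertex set of a component of order ≥ 2 of G[{u : τ(u)=deg_G(u)}]. A set X ⊆ V(G) is a non-monotone target set for (G,τ) if and only if N_G[U] ⊆ X and X \ N_G[U] is a non-monotone target set for (G',τ'), where G' = G − N_G[U] and τ'(u) = max{0, τ(u) − |N_G(u) ∩ N_G[U]|}. -/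
open Finset

/-!
A vertex of `U` has threshold equal to its degree, so it is active at time `t + 1` exactly when
its whole neighbourhood is active at time `t`. As `U` induces a connected graph of order at least
two, every vertex of `N[U]` has a neighbour in `U`; hence if `N[U]` is ever entirely active, it was
entirely active one step earlier, and so already in `X`. Conversely, if `N[U] ⊆ X` then `N[U]`
stays active forever, because a vertex of `N(U)` lies outside the component and thus has threshold
`0` or `1`. While `N[U]` is permanently active, the process on `G - N[U]` with every threshold
lowered by the number of neighbours in `N[U]` is exactly the trace of the process on `G`.
-/

section

variable {V : Type*} [Fintype V] [DecidableEq V] {G : SimpleGraph V} [DecidableRel G.Adj]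
  {τ : V → ℤ} {X : Finset V} {t : ℕ}

lemma mem_activation_succ {v : V} :
    v ∈ activation G τ X (t + 1) ↔ τ v ≤ #(G.neighborFinset v ∩ activation G τ X t) := by
  simp [activation]

lemma mem_activation_succ_iff_neighborFinset_subset {v : V} (hv : τ v = G.degree v) :
    v ∈ activation G τ X (t + 1) ↔ G.neighborFinset v ⊆ activation G τ X t := by
  rw [mem_activation_succ, hv, ← G.card_neighborFinset_eq_degree, Nat.cast_le, ← inter_eq_left]
  exact ⟨eq_of_subset_of_card_le inter_subset_left, fun h => (congrArg card h).ge⟩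

lemma mem_activation_succ_of_adj {u v : V} (hv : τ v ≤ 1) (huv : G.Adj u v)
    (hu : u ∈ activation G τ X t) : v ∈ activation G τ X (t + 1) := by
  have : 0 < #(G.neighborFinset v ∩ activation G τ X t) :=
    card_pos.2 ⟨u, mem_inter.2 ⟨(G.mem_neighborFinset v u).2 huv.symm, hu⟩⟩
  rw [mem_activation_succ]
  omega

lemma mem_closedNbhdFinset {U : Finset V} {v : V} :
    v ∈ closedNbhdFinset G U ↔ v ∈ U ∨ ∃ u ∈ U, G.Adj u v := by
  simp [closedNbhdFinset]

lemma neighborFinset_subset_closedNbhdFinset {U : Finset V} {u : V} (hu : u ∈ U) :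
    G.neighborFinset u ⊆ closedNbhdFinset G U := fun _ hv =>
  mem_closedNbhdFinset.2 (.inr ⟨u, hu, (G.mem_neighborFinset _ _).1 hv⟩)

lemma exists_adj_of_mem_closedNbhdFinset {U : Finset V} (hconn : (G.induce (U : Set V)).Connected)
    (hcard : 2 ≤ #U) {v : V} (hv : v ∈ closedNbhdFinset G U) : ∃ u ∈ U, G.Adj u v := by
  rcases mem_closedNbhdFinset.1 hv with hvU | h
  · have : Nontrivial (U : Set V) := Set.nontrivial_coe_sort.2 <|
      Finset.nontrivial_coe.2 <| one_lt_card_iff_nontrivial.1 hcard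
    obtain ⟨u, hvu⟩ := hconn.preconnected.exists_adj_of_nontrivial ⟨v, hvU⟩
    exact ⟨u, u.2, hvu.symm⟩
  · exact h

lemma IsComponentOf.notMem_of_mem_closedNbhdFinset {S : Set V} {U : Finset V}
    (hU : IsComponentOf G S U) {v : V} (hv : v ∈ closedNbhdFinset G U) (hvU : v ∉ U) : v ∉ S :=
  fun hvS => by
    obtain ⟨u, hu, huv⟩ := (mem_closedNbhdFinset.1 hv).resolve_left hvU
    exact hvU (hU.2.2.2 u hu v hvS huv)

section DegreeThresholdComponent

variable {U : Finset V} (hU : IsComponentOf G {u | τ u = G.degree u} U)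
include hU

lemma closedNbhdFinset_subset_activation_of_subset_succ (hcard : 2 ≤ #U)
    (h : U ⊆ activation G τ X (t + 1)) : closedNbhdFinset G U ⊆ activation G τ X t := by
  intro v hv
  obtain ⟨u, hu, huv⟩ := exists_adj_of_mem_closedNbhdFinset hU.2.2.1 hcard hv
  exact (mem_activation_succ_iff_neighborFinset_subset (hU.1 hu)).1 (h hu)
    ((G.mem_neighborFinset u v).2 huv)

lemma closedNbhdFinset_subset_of_subset_activation (hcard : 2 ≤ #U)
    (h : closedNbhdFinset G U ⊆ activation G τ X t) : closedNbhdFinset G U ⊆ X := by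
  induction t with
  | zero => exact h
  | succ t ih =>
    exact ih <| closedNbhdFinset_subset_activation_of_subset_succ hU hcard <|
      subset_union_left.trans h

lemma closedNbhdFinset_subset_activation (hτ : ∀ u, τ u = 0 ∨ τ u = 1 ∨ τ u = G.degree u)
    (hX : closedNbhdFinset G U ⊆ X) (t : ℕ) : closedNbhdFinset G U ⊆ activation G τ X t := by
  induction t with
  | zero => exact hX
  | succ t ih =>
    intro v hv
    by_cases hvU : v ∈ U
    · exact (mem_activation_succ_iff_neighborFinset_subset (hU.1 hvU)).2
        ((neighborFinset_subset_closedNbhdFinset hvU).trans ih)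
    · have hτv : τ v ≤ 1 := by
        have := hU.notMem_of_mem_closedNbhdFinset hv hvU
        rcases hτ v with h | h | h <;> simp_all
      obtain ⟨u, hu, huv⟩ := (mem_closedNbhdFinset.1 hv).resolve_left hvU
      exact mem_activation_succ_of_adj hτv huv (ih (subset_union_left hu))

end DegreeThresholdComponent

lemma card_restrict_neighborFinset_inter_add {W A : Finset V} (hWA : W ⊆ A)
    (u : {v | v ∉ W}) :
    #((restrict G {v | v ∉ W}).neighborFinset u ∩ univ.filter (fun w => ↑w ∈ A)) +
      #(G.neighborFinset u ∩ W) = #(G.neighborFinset u ∩ A) := by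
  have hmap : ((restrict G {v | v ∉ W}).neighborFinset u ∩ univ.filter (fun w => ↑w ∈ A)).map
      (Function.Embedding.subtype _) = (G.neighborFinset u ∩ A) \ W := by
    ext w
    simp only [mem_map, mem_inter, mem_filter, mem_univ, true_and, SimpleGraph.mem_neighborFinset,
      mem_sdiff, Function.Embedding.coe_subtype]
    exact ⟨fun ⟨a, h, ha⟩ => ha ▸ ⟨h, a.2⟩, fun ⟨h, hw⟩ => ⟨⟨w, hw⟩, h, rfl⟩⟩
  rw [← card_map, hmap, ← card_sdiff_add_card_inter (G.neighborFinset u ∩ A) W,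
    inter_assoc, inter_eq_right.2 hWA]

variable {W : Finset V}

lemma activation_restrict_compl (hW : ∀ t, W ⊆ activation G τ X t) (t : ℕ) :
    activation (restrict G {v | v ∉ W})
        (fun u => max 0 (τ u - #(G.neighborFinset u ∩ W))) (univ.filter (fun u => ↑u ∈ X)) t =
      univ.filter (fun u : {v | v ∉ W} => (u : V) ∈ activation G τ X t) := by
  induction t with
  | zero => rfl
  | succ t ih =>
    ext u
    have := card_restrict_neighborFinset_inter_add (G := G) (hW t) u
    rw [mem_activation_succ, ih, mem_filter, mem_activation_succ, max_le_iff]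
    simp only [mem_univ, true_and]
    omega

lemma isTargetSet_restrict_compl_iff (hW : ∀ t, W ⊆ activation G τ X t) :
    IsTargetSet (restrict G {v | v ∉ W})
        (fun u => max 0 (τ u - #(G.neighborFinset u ∩ W))) (univ.filter (fun u => ↑u ∈ X)) ↔
      IsTargetSet G τ X := by
  refine exists_congr fun t₀ => forall₂_congr fun t _ => ?_
  rw [activation_restrict_compl hW, filter_eq_self, eq_univ_iff_forall]
  refine ⟨fun h v => ?_, fun h u _ => h u⟩
  by_cases hv : v ∈ W
  · exact hW t hv
  · exact h ⟨v, hv⟩ (mem_univ _)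

end

theorem stmt_7 {V : Type*} [Fintype V] [DecidableEq V] (G : SimpleGraph V)
    [DecidableRel G.Adj] (τ : V → ℤ)
    (hτ : ∀ u, τ u = 0 ∨ τ u = 1 ∨ τ u = (G.degree u : ℤ))
    (U : Finset V)
    (hU : IsComponentOf G {u | τ u = (G.degree u : ℤ)} ↑U)
    (hcard : 2 ≤ U.card) (X : Finset V) :
    IsTargetSet G τ X ↔
      (closedNbhdFinset G U ⊆ X ∧
        IsTargetSet (restrict G {v | v ∉ closedNbhdFinset G U})
          (fun u => max 0 (τ ↑u - ((G.neighborFinset ↑u ∩ closedNbhdFinset G U).card : ℤ)))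
          (Finset.univ.filter (fun u => ↑u ∈ X))) := by
  have hinv := closedNbhdFinset_subset_activation hU hτ (X := X)
  constructor
  · intro hX
    have hsub : closedNbhdFinset G U ⊆ X := by
      obtain ⟨t₀, ht₀⟩ := hX
      exact closedNbhdFinset_subset_of_subset_activation hU hcard (ht₀ t₀ le_rfl ▸ subset_univ _)
    exact ⟨hsub, (isTargetSet_restrict_compl_iff (hinv hsub)).2 hX⟩
  · rintro ⟨hsub, hX⟩
    exact (isTargetSet_restrict_compl_iff (hinv hsub)).1 hX
end
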